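/- arXiv:2210.08421 — 5 statements merged into one kernel-verified Lean document; each statement's English description precedes it below -/
import Mathlib

section
/- Suppose that (i) for every y ∈ Y the map j ↦ h_j(y) on Fin k is injective, and (ii) for every y ∈ Y there exists an index j ∈ Fin k such that for all y' ∈ Y with y' ≠ y and all l ∈ Fin k, h_l(y') ≠ h_j(y) (i.e., y has a 'free' hash position not occupied by any other element of Y). Then there exists an array GBF : Fin m → ZMod p such that for every y ∈ Y, the sum over j ∈ {0,…,k−1} of GBF(h_j(y)) equals g(y). -/
theorem stmt_1 {α : Type*} (k m p : ℕ) (hk : 0 < k) (hm : 0 < m) (hp : 0 < p)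
    (h : Fin k → α → Fin m) (Y : Finset α) (g : α → ZMod p)
    (hinj : ∀ y ∈ Y, Function.Injective (fun j : Fin k => h j y))
    (hfree : ∀ y ∈ Y, ∃ j : Fin k, ∀ y' ∈ Y, y' ≠ y → ∀ l : Fin k, h l y' ≠ h j y) :
    ∃ GBF : Fin m → ZMod p, ∀ y ∈ Y, ∑ j : Fin k, GBF (h j y) = g y := by
  classical
  choose j hj using hfree
  refine ⟨fun x => if hx : ∃ y, ∃ hy : y ∈ Y, h (j y hy) y = x then g hx.choose else 0,
    fun y hy => ?_⟩
  rw [Finset.sum_eq_single (j y hy)]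
  · have hex : ∃ y', ∃ hy' : y' ∈ Y, h (j y' hy') y' = h (j y hy) y := ⟨y, hy, rfl⟩
    dsimp only
    rw [dif_pos hex]
    obtain ⟨hy', heq⟩ := hex.choose_spec
    by_cases hne : hex.choose = y
    · rw [hne]
    · exact absurd heq (hj y hy _ hy' hne _)
  · intro j' _ hj'
    dsimp only
    rw [dif_neg]
    rintro ⟨y', hy', heq⟩
    by_cases hne : y' = y
    · subst hne
      exact hj' ((hinj y' hy' heq).symm)
    · exact hj y' hy' y hy (fun e => hne e.symm) j' heq.symm
  · intro habs
    exact absurd (Finset.mem_univ _) habs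
end

section
/- Let k be a natural number, let η be a natural number with η ≤ k, let μ be an element of ZMod (k+1), set μ' = (η : ZMod (k+1)) − μ, let b₁ be a Boolean, and define b₀ = (¬b₁) if μ = (k : ZMod (k+1)) − μ', and b₀ = b₁ otherwise. Then b₀ XOR b₁ = true if and only if η = k. -/
theorem stmt_3 (k η : ℕ) (hη : η ≤ k) (μ μ' : ZMod (k + 1))
    (hμ' : μ' = (η : ZMod (k + 1)) - μ) (b₁ b₀ : Bool)
    (hb₀ : b₀ = if μ = (k : ZMod (k + 1)) - μ' then !b₁ else b₁) :
    Bool.xor b₀ b₁ = true ↔ η = k := by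
  have hcond : (μ = (k : ZMod (k + 1)) - μ') ↔ η = k := by
    subst hμ'
    constructor
    · intro h
      have : (η : ZMod (k + 1)) = (k : ZMod (k + 1)) := by linear_combination h
      have := (ZMod.natCast_eq_natCast_iff' _ _ _).mp this
      simpa [Nat.mod_eq_of_lt (Nat.lt_succ_of_le hη), Nat.mod_eq_of_lt (Nat.lt_succ_self k)] using this
    · intro h; subst h; ring
  subst hb₀
  by_cases h : μ = (k : ZMod (k + 1)) - μ'
  · simp [h, hcond.mp h]
  · simp [h]; exact fun hk => h (hcond.mpr hk)
end

section
/- Let p be a positive natural number, let Δ, δ, ρ, α be elements of ZMod p, and let b₀, b₁ be Booleans. Set r = (if b₁ then Δ + (1 − ind(b₀))·δ else Δ + ind(b₀)·δ) and r' = (if b₀ then r + (1 − ind(b₁))·(ρ − α) − ind(b₁)·α else r + ind(b₁)·(ρ − α) − (1 − ind(b₁))·α). Then (r' − Δ) + α = δ + ρ if b₀ XOR b₁ = true, and (r' − Δ) + α = 0 otherwise. Consequently, the client's output r' − Δ and the server's output −α are additive secret shares of δ + ρ when the shared bit b₀ XOR b₁ equals 1, and additive secret shares of 0 otherwise. -/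
def ind (p : ℕ) (b : Bool) : ZMod p := if b then 1 else 0

theorem stmt_6 (p : ℕ) (hp : 0 < p) (Δ δ ρ α : ZMod p) (b₀ b₁ : Bool)
    (r r' : ZMod p)
    (hr : r = if b₁ = true then Δ + (1 - ind p b₀) * δ else Δ + ind p b₀ * δ)
    (hr' : r' = if b₀ = true then r + (1 - ind p b₁) * (ρ - α) - ind p b₁ * α
                else r + ind p b₁ * (ρ - α) - (1 - ind p b₁) * α) :
    (Bool.xor b₀ b₁ = true → (r' - Δ) + α = δ + ρ) ∧
    (Bool.xor b₀ b₁ = false → (r' - Δ) + α = 0) := by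
  subst hr hr'
  cases b₀ <;> cases b₁ <;> simp [ind] <;> ring
end

section
/- Let η = Σ_{j ∈ Fin k} BF(h_j(x)) (a natural number with η ≤ k), and suppose the Bloom filter has no false positive on x, i.e., η = k implies x ∈ Y. Let μ be any element of ZMod (k+1), set μ' = (η : ZMod (k+1)) − μ, let b₁ be any Boolean, and set b₀ = (¬b₁) if μ = (k : ZMod (k+1)) − μ', and b₀ = b₁ otherwise. Let δ be any element of ZMod p, set ρ = s · (Σ_{j ∈ Fin k} GBF(h_j(x))) − δ, and let Δ, α be any elements of ZMod p. Set r = (if b₁ then Δ + (1 − ind(b₀))·s' else Δ + ind(b₀)·s') with s' = δ, and r' = (if b₀ then r + (1 − ind(b₁))·(ρ − α) − ind(b₁)·α else r + ind(b₁)·(ρ − α) − (1 − ind(b₁))·α). Then (r' − Δ) + α = s · g(x) if x ∈ Y, and (r' − Δ) + α = 0 if x ∉ Y. -/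
theorem stmt_7 {α : Type*} [DecidableEq α] (k m p : ℕ) (hk : 0 < k) (hm : 0 < m) (hp : 0 < p)
    (h : Fin k → α → Fin m) (Y : Finset α) (g : α → ZMod p)
    (BF : Fin m → ℕ)
    (hBF : ∀ i : Fin m, BF i = if ∃ y ∈ Y, ∃ j : Fin k, h j y = i then 1 else 0)
    (GBF : Fin m → ZMod p)
    (hGBF : ∀ y ∈ Y, ∑ j : Fin k, GBF (h j y) = g y)
    (x : α) (s : ZMod p)
    (η : ℕ) (hη : η = ∑ j : Fin k, BF (h j x)) (hηk : η ≤ k)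
    (hfp : η = k → x ∈ Y)
    (μ μ' : ZMod (k + 1)) (hμ' : μ' = (η : ZMod (k + 1)) - μ)
    (b₁ b₀ : Bool)
    (hb₀ : b₀ = if μ = (k : ZMod (k + 1)) - μ' then !b₁ else b₁)
    (δ ρ : ZMod p) (hρ : ρ = s * (∑ j : Fin k, GBF (h j x)) - δ)
    (Δ a : ZMod p)
    (r r' : ZMod p)
    (hr : r = if b₁ = true then Δ + (1 - ind p b₀) * δ else Δ + ind p b₀ * δ)
    (hr' : r' = if b₀ = true then r + (1 - ind p b₁) * (ρ - a) - ind p b₁ * a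
                else r + ind p b₁ * (ρ - a) - (1 - ind p b₁) * a) :
    (x ∈ Y → (r' - Δ) + a = s * g x) ∧ (x ∉ Y → (r' - Δ) + a = 0) := by
  have hcond : (μ = (k : ZMod (k + 1)) - μ') ↔ η = k := by
    subst hμ'
    constructor
    · intro hc
      have : (η : ZMod (k + 1)) = (k : ZMod (k + 1)) := by linear_combination hc
      have := congrArg (ZMod.val) this
      rwa [ZMod.val_natCast_of_lt (by omega), ZMod.val_natCast_of_lt (by omega)] at this
    · intro hc; subst hc; ring
  constructor
  · intro hx
    have hηek : η = k := by
      have : ∀ j : Fin k, BF (h j x) = 1 := by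
        intro j; rw [hBF]; exact if_pos ⟨x, hx, j, rfl⟩
      rw [hη, Finset.sum_congr rfl (fun j _ => this j)]
      simp
    have hb : b₀ = !b₁ := by rw [hb₀, if_pos (hcond.mpr hηek)]
    have hgx : s * (∑ j : Fin k, GBF (h j x)) = s * g x := by rw [hGBF x hx]
    cases b₁ <;> simp [hb] at hr hr' <;> subst hr hr' <;>
      simp [ind] <;> rw [hρ, ← hgx] <;> ring
  · intro hx
    have hηek : η ≠ k := fun hc => hx (hfp hc)
    have hb : b₀ = b₁ := by rw [hb₀, if_neg (fun hc => hηek (hcond.mp hc))]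
    cases b₁ <;> simp [hb] at hr hr' <;> subst hr hr' <;> simp [ind] <;> ring
end

section
/- Suppose for every i ∈ Fin t there exists j ∈ Fin k with β(i) = h_j(x(i)) (the client places each query into one of its k hashed bins). Then Σ_{b ∈ Fin m} Σ_{i : β(i) = b} Σ_{y ∈ Y, ∃ j, h_j(y) = b} (if x(i) = y then s(i)·g(y) else 0) = Σ_{i ∈ Fin t} Σ_{y ∈ Y} (if x(i) = y then s(i)·g(y) else 0); that is, evaluating the sparse inner product bin-by-bin, where the server replicates each of its items into all k of its hashed bins, computes the same value as the unpartitioned sparse inner product. -/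
theorem stmt_10 {α : Type*} [DecidableEq α] (k m t p : ℕ)
    (hk : 0 < k) (hm : 0 < m) (hp : 0 < p)
    (h : Fin k → α → Fin m) (Y : Finset α) (g : α → ZMod p)
    (x : Fin t → α) (s : Fin t → ZMod p) (β : Fin t → Fin m)
    (hβ : ∀ i : Fin t, ∃ j : Fin k, β i = h j (x i)) :
    ∑ b : Fin m, ∑ i ∈ Finset.univ.filter (fun i : Fin t => β i = b),
        ∑ y ∈ Y.filter (fun y => ∃ j : Fin k, h j y = b),
          (if x i = y then s i * g y else 0) =
      ∑ i : Fin t, ∑ y ∈ Y, (if x i = y then s i * g y else 0) := by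
  have step1 : ∀ b : Fin m, ∑ i ∈ Finset.univ.filter (fun i : Fin t => β i = b),
        ∑ y ∈ Y.filter (fun y => ∃ j : Fin k, h j y = b),
          (if x i = y then s i * g y else 0)
      = ∑ i ∈ Finset.univ.filter (fun i : Fin t => β i = b),
        ∑ y ∈ Y.filter (fun y => ∃ j : Fin k, h j y = β i),
          (if x i = y then s i * g y else 0) := by
    intro b
    refine Finset.sum_congr rfl fun i hi => ?_
    rw [(Finset.mem_filter.mp hi).2]
  simp_rw [step1]
  rw [Finset.sum_fiberwise]
  refine Finset.sum_congr rfl fun i _ => ?_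
  apply Finset.sum_filter_of_ne
  intro y hy hne
  by_cases hxy : x i = y
  · obtain ⟨j, hj⟩ := hβ i
    exact ⟨j, by rw [← hxy, ← hj]⟩
  · simp [hxy] at hne
end
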